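/- arXiv:1805.03748 — 3 statements merged into one kernel-verified Lean document; each statement's English description precedes it below -/
import Mathlib

section
/- Let ω, μ : (0,r₀] → [0,∞) with ω nondecreasing, and suppose there exist s ≥ 0, α ∈ (0,1), M > 0 such that ω(r) ≤ (1 − 2^{−s})·ω(8r) + 2^s·M·(r/r₀)^α for all 0 < r ≤ r₀/16, and ω(r₀/2) + ω bounded by some constant ω₀. Then there exist σ ∈ (0,1) and c > 0 depending only on s and α such that ω(r) ≤ c·(r/r₀)^σ·(ω(r₀/2) + M) for all 0 < r ≤ r₀/2. -/
/-!
Put `A = ω(r₀/2) + M` and `ε = 2^{-s}`. Choose `σ ≤ α` so small that `8^σ ≤ 1 + ε/2`; then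
the contraction `1 - ε` beats the loss `8^σ` incurred when passing from `8r` to `r`, since
`(1 - ε)(1 + ε/2) ≤ 1 - ε/2`. The remaining `ε/2` absorbs the inhomogeneous term
`2^s M (r/r₀)^α ≤ 2^s (r/r₀)^σ A` once `c ≥ 2^{2s+1}`, so the bound `ω r ≤ c (r/r₀)^σ A`, which
is trivial on `(r₀/16, r₀/2]` for `c ≥ 16`, propagates from `8r` to `r` down all scales.
-/

open Set Filter Topology

lemma forall_of_scale_induction {P : ℝ → Prop} {b q : ℝ} (hq : 1 < q)
    (base : ∀ r, b / q < r → r ≤ b → P r)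
    (step : ∀ r, 0 < r → r ≤ b / q → P (q * r) → P r) :
    ∀ r, 0 < r → r ≤ b → P r := by
  have hq₀ : 0 < q := zero_lt_one.trans hq
  have key : ∀ n : ℕ, ∀ r, 0 < r → b / q ^ n < r → r ≤ b → P r := by
    intro n
    induction n with
    | zero => intro r _ hlow hrb; rw [pow_zero, div_one] at hlow; linarith
    | succ n ih =>
      intro r hr hlow hrb
      by_cases hr' : b / q < r
      · exact base r hr' hrb
      · rw [not_lt] at hr'
        refine step r hr hr' (ih (q * r) (by positivity) ?_ ?_)
        · rw [pow_succ, ← div_div, div_lt_iff₀ hq₀] at hlow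
          linarith
        · rwa [le_div_iff₀ hq₀, mul_comm] at hr'
  intro r hr hrb
  obtain ⟨n, hn⟩ := pow_unbounded_of_one_lt (b / r) hq
  refine key n r hr ?_ hrb
  rwa [div_lt_iff₀ hr, ← div_lt_iff₀' (by positivity)] at hn

lemma exists_rpow_le_one_add {b δ τ : ℝ} (hb : b ≠ 0) (hδ : 0 < δ) (hτ : 0 < τ) :
    ∃ σ ∈ Ioo 0 τ, b ^ σ ≤ 1 + δ := by
  have hlim : Tendsto (fun σ : ℝ => b ^ σ) (𝓝[>] 0) (𝓝 1) := by
    simpa using (Real.continuousAt_const_rpow (b := 0) hb).tendsto.mono_left nhdsWithin_le_nhds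
  have hsmall : ∀ᶠ σ in 𝓝[>] 0, σ ∈ Ioo 0 τ := Ioo_mem_nhdsGT hτ
  exact (hsmall.and (hlim.eventually (ge_mem_nhds (by linarith)))).exists

theorem le_mul_rpow_of_le_one_sub_mul_add {ω : ℝ → ℝ} {r₀ M ε K α σ c : ℝ}
    (hr₀ : 0 < r₀) (hM : 0 ≤ M) (hmono : MonotoneOn ω (Ioc 0 r₀)) (hω₀ : 0 ≤ ω (r₀ / 2))
    (hε : ε ≤ 1) (hK : 0 ≤ K) (hσα : σ ≤ α) (hσ₁ : σ ≤ 1) (h8σ : (8 : ℝ) ^ σ ≤ 1 + ε / 2)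
    (hc : 16 ≤ c) (hKc : 2 * K ≤ c * ε)
    (hrec : ∀ r, 0 < r → r ≤ r₀ / 16 → ω r ≤ (1 - ε) * ω (8 * r) + K * M * (r / r₀) ^ α) :
    ∀ r, 0 < r → r ≤ r₀ / 2 → ω r ≤ c * (r / r₀) ^ σ * (ω (r₀ / 2) + M) := by
  set A := ω (r₀ / 2) + M
  have hA : 0 ≤ A := by positivity
  have hr₀16 : r₀ / 2 / 8 = r₀ / 16 := by ring
  refine forall_of_scale_induction (by norm_num : (1 : ℝ) < 8) ?_ ?_
  · intro r hlow hrb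
    rw [hr₀16] at hlow
    have hr : 0 < r := by linarith [div_pos hr₀ (by norm_num : (0 : ℝ) < 16)]
    have h16r : 1 ≤ 16 * (r / r₀) := by rw [mul_div_assoc', le_div_iff₀ hr₀]; linarith
    have hx₁ : r / r₀ ≤ 1 := by rw [div_le_one hr₀]; linarith
    have hx : r / r₀ ≤ (r / r₀) ^ σ := by
      simpa using Real.rpow_le_rpow_of_exponent_ge (by positivity) hx₁ hσ₁
    calc ω r ≤ ω (r₀ / 2) := hmono ⟨hr, by linarith⟩ ⟨by positivity, by linarith⟩ hrb
      _ ≤ A := by linarith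
      _ ≤ 16 * (r / r₀) * A := le_mul_of_one_le_left hA h16r
      _ ≤ c * (r / r₀) ^ σ * A := by gcongr
  · intro r hr hr16 ih
    rw [hr₀16] at hr16
    have hx₀ : 0 < r / r₀ := div_pos hr hr₀
    have hx₁ : r / r₀ ≤ 1 := by rw [div_le_one hr₀]; linarith
    rw [mul_div_assoc, Real.mul_rpow (by norm_num) hx₀.le] at ih
    have hcontr : (1 - ε) * 8 ^ σ * c + K ≤ c := by
      have : (1 - ε) * 8 ^ σ ≤ 1 - ε / 2 := by
        nlinarith [mul_le_mul_of_nonneg_left h8σ (sub_nonneg.2 hε), sq_nonneg ε]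
      nlinarith
    calc ω r ≤ (1 - ε) * ω (8 * r) + K * M * (r / r₀) ^ α := hrec r hr hr16
      _ ≤ (1 - ε) * (c * (8 ^ σ * (r / r₀) ^ σ) * A) + K * A * (r / r₀) ^ σ := by
        gcongr (1 - ε) * ?_ + ?_
        exact mul_le_mul (by gcongr; linarith) (Real.rpow_le_rpow_of_exponent_ge hx₀ hx₁ hσα)
          (by positivity) (by positivity)
      _ = ((1 - ε) * 8 ^ σ * c + K) * ((r / r₀) ^ σ * A) := by ring
      _ ≤ c * ((r / r₀) ^ σ * A) := by gcongr
      _ = c * (r / r₀) ^ σ * A := by ring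

/-- Oscillation decay iteration lemma: if `ω : (0,r₀] → [0,∞)` is nondecreasing and
`ω r ≤ (1 − 2^{−s})·ω(8r) + 2^s·M·(r/r₀)^α` for all `0 < r ≤ r₀/16`, then there are
`σ ∈ (0,1)` and `c > 0`, depending only on `s` and `α`, with
`ω r ≤ c·(r/r₀)^σ·(ω(r₀/2) + M)` for all `0 < r ≤ r₀/2`. -/
theorem stmt12 (s α : ℝ) (hs : 0 ≤ s) (hα₀ : 0 < α) (hα₁ : α < 1) :
    ∃ σ : ℝ, σ ∈ Ioo (0:ℝ) 1 ∧ ∃ c > (0:ℝ),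
      ∀ r₀ > (0:ℝ), ∀ M > (0:ℝ), ∀ ω : ℝ → ℝ,
        MonotoneOn ω (Ioc 0 r₀) →
        (∀ r ∈ Ioc (0:ℝ) r₀, 0 ≤ ω r) →
        (∀ r : ℝ, 0 < r → r ≤ r₀ / 16 →
          ω r ≤ (1 - 2 ^ (-s)) * ω (8 * r) + 2 ^ s * M * (r / r₀) ^ α) →
        ∀ r : ℝ, 0 < r → r ≤ r₀ / 2 →
          ω r ≤ c * (r / r₀) ^ σ * (ω (r₀ / 2) + M) := by
  obtain ⟨σ, ⟨hσ₀, hσα⟩, h8σ⟩ :=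
    exists_rpow_le_one_add (b := 8) (δ := 2 ^ (-s) / 2) (by norm_num) (by positivity) hα₀
  refine ⟨σ, ⟨hσ₀, hσα.trans hα₁⟩, 16 + 2 ^ (2 * s + 1), by positivity, ?_⟩
  intro r₀ hr₀ M hM ω hmono hnn hrec
  have hKc : 2 * 2 ^ s ≤ (16 + 2 ^ (2 * s + 1)) * (2 : ℝ) ^ (-s) := by
    have : (2 : ℝ) ^ (2 * s + 1) * 2 ^ (-s) = 2 * 2 ^ s := by
      rw [← Real.rpow_add two_pos, show 2 * s + 1 + -s = 1 + s by ring,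
        Real.rpow_add two_pos, Real.rpow_one]
    nlinarith [Real.rpow_pos_of_pos (two_pos : (0 : ℝ) < 2) (-s)]
  exact le_mul_rpow_of_le_one_sub_mul_add hr₀ hM.le hmono (hnn _ ⟨by positivity, by linarith⟩)
    (Real.rpow_le_one_of_one_le_of_nonpos one_le_two (neg_nonpos.2 hs)) (by positivity)
    hσα.le (hσα.trans hα₁).le h8σ (le_add_of_nonneg_right (by positivity)) hKc hrec
end

section
/- Let A : ℝ^{2n} → ℝ^{2n} be C¹ with symmetric Jacobian DA(z) satisfying F(|z|)·|ξ|² ≤ ⟨DA(z)ξ, ξ⟩ for all z, ξ ∈ ℝ^{2n}, where F(t) = g(t)/t and g is C¹ with g(0)=0 and δ ≤ t·g'(t)/g(t) ≤ g₀ (0 < δ ≤ g₀). Then there is a constant c(g₀) > 0 such that ⟨A(z), z⟩ ≥ c(g₀)·|z|²·F(|z|) ≥ c(g₀)·G(|z|) for all z ≠ 0, where G(t) = ∫₀ᵗ g(s) ds. -/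
open Set MeasureTheory
open scoped RealInnerProductSpace

/-! The upper Lieberman bound `t g' ≤ g₀ g` makes `g t / t ^ g₀` nonincreasing, so `g` is doubling:
`g t ≤ 2 ^ g₀ g u` for `t / 2 ≤ u ≤ t`. Along the ray `s ↦ s z` the derivative of
`⟪A (s z), z⟫` is `⟪DA (s z) z, z⟫ ≥ g (s ‖z‖) ‖z‖ / s ≥ 0`, and on `[1/2, 1]` doubling bounds it
below by `‖z‖ g ‖z‖ / 2 ^ g₀`; integrating from `0` gives `⟪A z, z⟫ ≥ ‖z‖ g ‖z‖ / (2 · 2 ^ g₀)`.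
Finally `g` is nondecreasing, so `G t ≤ t g t = t² F t`. -/

theorem antitoneOn_div_rpow_of_mul_deriv_le {g g' : ℝ → ℝ} {p : ℝ}
    (hderiv : ∀ t > (0:ℝ), HasDerivAt g (g' t) t)
    (hle : ∀ t > (0:ℝ), t * g' t ≤ p * g t) :
    AntitoneOn (fun t => g t / t ^ p) (Ioi 0) := by
  have hd : ∀ t ∈ Ioi (0:ℝ), HasDerivAt (fun t => g t / t ^ p)
      ((g' t * t ^ p - g t * (p * t ^ (p - 1))) / (t ^ p) ^ 2) t := fun t ht =>
    (hderiv t ht).div (Real.hasDerivAt_rpow_const (Or.inl ht.ne')) (Real.rpow_pos_of_pos ht p).ne'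
  refine antitoneOn_of_hasDerivWithinAt_nonpos (convex_Ioi 0)
    (fun t ht => (hd t ht).continuousAt.continuousWithinAt)
    (fun t ht => (hd t (interior_subset ht)).hasDerivWithinAt) fun t ht => ?_
  rw [interior_Ioi] at ht
  have ht' : (0:ℝ) < t := ht
  have hnum : g' t * t ^ p - g t * (p * t ^ (p - 1)) = (t * g' t - p * g t) * t ^ (p - 1) := by
    rw [Real.rpow_sub ht', Real.rpow_one]
    field_simp
  rw [hnum]
  exact div_nonpos_of_nonpos_of_nonneg
    (mul_nonpos_of_nonpos_of_nonneg (sub_nonpos.2 (hle t ht')) (Real.rpow_nonneg ht'.le _))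
    (sq_nonneg _)

theorem le_two_rpow_mul_of_antitoneOn_div_rpow {g : ℝ → ℝ} {p t u : ℝ} (hp : 0 ≤ p)
    (hanti : AntitoneOn (fun t => g t / t ^ p) (Ioi 0)) (ht : 0 < t) (hgt : 0 ≤ g t)
    (hu : u ∈ Icc (t / 2) t) :
    g t ≤ 2 ^ p * g u := by
  have hu0 : 0 < u := by linarith [hu.1]
  have hratio : g t / t ^ p ≤ g u / u ^ p := hanti hu0 ht hu.2
  have hpow : (t / 2) ^ p ≤ u ^ p := Real.rpow_le_rpow (by positivity) hu.1 hp
  have htp : 0 < t ^ p := Real.rpow_pos_of_pos ht p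
  have hup : 0 < u ^ p := Real.rpow_pos_of_pos hu0 p
  calc g t = 2 ^ p * (g t / t ^ p * (t / 2) ^ p) := by
        rw [Real.div_rpow ht.le zero_le_two]
        field_simp
    _ ≤ 2 ^ p * (g u / u ^ p * u ^ p) := by
        gcongr
        exact (div_nonneg hgt htp.le).trans hratio
    _ = 2 ^ p * g u := by rw [div_mul_cancel₀ _ hup.ne']

theorem intervalIntegral_le_mul_of_monotoneOn {f : ℝ → ℝ} {a b : ℝ} (hab : a ≤ b)
    (hf : MonotoneOn f (Icc a b)) :
    ∫ s in a..b, f s ≤ (b - a) * f b := by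
  calc ∫ s in a..b, f s ≤ ∫ _ in a..b, f b :=
        intervalIntegral.integral_mono_on hab (hf.mono (by rw [uIcc_of_le hab])).intervalIntegrable
          intervalIntegrable_const fun s hs => hf hs (right_mem_Icc.2 hab) hs.2
    _ = (b - a) * f b := by simp

theorem half_mul_le_sub_of_hasDerivAt {f f' : ℝ → ℝ} {m : ℝ}
    (hf : ∀ s, HasDerivAt f (f' s) s) (h_first : ∀ s ∈ Ioo (0:ℝ) (1 / 2), 0 ≤ f' s)
    (h_second : ∀ s ∈ Ioo (1 / 2 : ℝ) 1, m ≤ f' s) :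
    m / 2 ≤ f 1 - f 0 := by
  have hcont : ContinuousOn f univ := fun s _ => (hf s).continuousAt.continuousWithinAt
  have hdiff : DifferentiableOn ℝ f univ := fun s _ => (hf s).differentiableAt.differentiableWithinAt
  have mean_value : ∀ a b C : ℝ, a ≤ b → (∀ s ∈ Ioo a b, C ≤ f' s) → C * (b - a) ≤ f b - f a :=
    fun a b C hab hC => (convex_Icc a b).mul_sub_le_image_sub_of_le_deriv
      (hcont.mono (subset_univ _)) (hdiff.mono (subset_univ _))
      (fun s hs => by rw [interior_Icc] at hs; rw [(hf s).deriv]; exact hC s hs)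
      a (left_mem_Icc.2 hab) b (right_mem_Icc.2 hab) hab
  have h1 := mean_value 0 (1 / 2) 0 (by norm_num) h_first
  have h2 := mean_value (1 / 2) 1 m (by norm_num) h_second
  linarith

section Ray

variable {E : Type*} [NormedAddCommGroup E] [InnerProductSpace ℝ E]
  {A : E → E} {DA : E → E →L[ℝ] E} {g : ℝ → ℝ}

theorem hasDerivAt_inner_apply_smul (hA : ∀ z, HasFDerivAt A (DA z) z) (z : E) (s : ℝ) :
    HasDerivAt (fun s : ℝ => ⟪A (s • z), z⟫) ⟪DA (s • z) z, z⟫ s := by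
  have hray : HasDerivAt (fun s : ℝ => s • z) z s := by
    simpa using (hasDerivAt_id s).smul_const z
  simpa using ((hA (s • z)).comp_hasDerivAt s hray).inner ℝ (hasDerivAt_const s z)

theorem mul_norm_div_le_inner_apply_smul
    (hlower : ∀ z ξ, g ‖z‖ / ‖z‖ * ‖ξ‖ ^ 2 ≤ ⟪DA z ξ, ξ⟫) (z : E) ⦃s : ℝ⦄ (hs : 0 < s) :
    g (s * ‖z‖) * ‖z‖ / s ≤ ⟪DA (s • z) z, z⟫ := by
  have h := hlower (s • z) z
  rw [norm_smul, Real.norm_of_nonneg hs.le] at h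
  rcases eq_or_ne ‖z‖ 0 with hz | hz
  · simpa [hz] using h
  · convert h using 1
    field_simp

theorem norm_mul_le_inner_apply_self {K : ℝ} (hK : 0 < K) (hA0 : A 0 = 0)
    (hA : ∀ z, HasFDerivAt A (DA z) z)
    (hlower : ∀ z ξ, g ‖z‖ / ‖z‖ * ‖ξ‖ ^ 2 ≤ ⟪DA z ξ, ξ⟫)
    (hg : ∀ t > (0:ℝ), 0 ≤ g t)
    (hdoubling : ∀ t > (0:ℝ), ∀ u ∈ Icc (t / 2) t, g t ≤ K * g u)
    {z : E} (hz : z ≠ 0) :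
    ‖z‖ * g ‖z‖ ≤ 2 * K * ⟪A z, z⟫ := by
  have ht : 0 < ‖z‖ := norm_pos_iff.2 hz
  have hderiv_lower := mul_norm_div_le_inner_apply_smul hlower z
  have key := half_mul_le_sub_of_hasDerivAt (m := ‖z‖ * g ‖z‖ / K)
    (hasDerivAt_inner_apply_smul hA z)
    (fun s hs => (div_nonneg (mul_nonneg (hg _ (mul_pos hs.1 ht)) ht.le) hs.1.le).trans
      (hderiv_lower hs.1))
    (fun s hs => by
      have hs0 : 0 < s := by linarith [hs.1]
      have hdoub : g ‖z‖ ≤ K * g (s * ‖z‖) :=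
        hdoubling _ ht _ ⟨by nlinarith [hs.1], by nlinarith [hs.2]⟩
      calc ‖z‖ * g ‖z‖ / K ≤ g (s * ‖z‖) * ‖z‖ := by
            rw [div_le_iff₀ hK]; nlinarith
        _ ≤ g (s * ‖z‖) * ‖z‖ / s :=
            le_div_self (mul_nonneg (hg _ (mul_pos hs0 ht)) ht.le) hs0 hs.2.le
        _ ≤ ⟪DA (s • z) z, z⟫ := hderiv_lower hs0)
  simp only [one_smul, zero_smul, hA0, inner_zero_left, sub_zero] at key
  rw [div_div, div_le_iff₀ (by positivity)] at key
  linarith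

end Ray

theorem stmt14_general (n : ℕ)
    (g g' F G : ℝ → ℝ) (δ g₀ : ℝ) (hδ : 0 < δ) (hδg₀ : δ ≤ g₀)
    (hcont : ContinuousOn g (Ici 0))
    (hderiv : ∀ t > (0:ℝ), HasDerivAt g (g' t) t)
    (hpos : ∀ t > (0:ℝ), 0 < g t)
    (hlieb₁ : ∀ t > (0:ℝ), δ * g t ≤ t * g' t)
    (hlieb₂ : ∀ t > (0:ℝ), t * g' t ≤ g₀ * g t)
    (hF : ∀ t, F t = g t / t)
    (hG : ∀ t, G t = ∫ s in (0:ℝ)..t, g s)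
    (A : EuclideanSpace ℝ (Fin (2 * n)) → EuclideanSpace ℝ (Fin (2 * n)))
    (DA : EuclideanSpace ℝ (Fin (2 * n)) →
      EuclideanSpace ℝ (Fin (2 * n)) →L[ℝ] EuclideanSpace ℝ (Fin (2 * n)))
    (hA0 : A 0 = 0)
    (hAderiv : ∀ z, HasFDerivAt A (DA z) z)
    (hlower : ∀ z ξ, F ‖z‖ * ‖ξ‖ ^ 2 ≤ ⟪DA z ξ, ξ⟫) :
    ∃ c > (0:ℝ), ∀ z : EuclideanSpace ℝ (Fin (2 * n)), z ≠ 0 →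
      c * (‖z‖ ^ 2 * F ‖z‖) ≤ ⟪A z, z⟫ ∧
      c * G ‖z‖ ≤ c * (‖z‖ ^ 2 * F ‖z‖) := by
  have hg₀ : 0 ≤ g₀ := hδ.le.trans hδg₀
  have hanti := antitoneOn_div_rpow_of_mul_deriv_le hderiv hlieb₂
  have hmono : MonotoneOn g (Ici 0) := by
    refine monotoneOn_of_hasDerivWithinAt_nonneg (f' := g') (convex_Ici 0) hcont
      (fun t ht => ?_) fun t ht => ?_
    all_goals simp only [interior_Ici] at ht ⊢
    · exact (hderiv t ht).hasDerivWithinAt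
    · exact nonneg_of_mul_nonneg_right ((mul_pos hδ (hpos t ht)).le.trans (hlieb₁ t ht)) ht
  refine ⟨(2 * 2 ^ g₀)⁻¹, by positivity, fun z hz => ?_⟩
  have ht : 0 < ‖z‖ := norm_pos_iff.2 hz
  have hsq : ‖z‖ ^ 2 * F ‖z‖ = ‖z‖ * g ‖z‖ := by rw [hF]; field_simp
  have hA := norm_mul_le_inner_apply_self (by positivity) hA0 hAderiv
    (fun z ξ => hF ‖z‖ ▸ hlower z ξ) (fun t ht => (hpos t ht).le)
    (fun t ht u hu => le_two_rpow_mul_of_antitoneOn_div_rpow hg₀ hanti ht (hpos t ht).le hu) hz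
  have hGle : G ‖z‖ ≤ ‖z‖ * g ‖z‖ := by
    simpa [hG] using intervalIntegral_le_mul_of_monotoneOn ht.le (hmono.mono Icc_subset_Ici_self)
  rw [hsq]
  refine ⟨?_, by gcongr⟩
  rw [← div_eq_inv_mul, div_le_iff₀ (by positivity)]
  linarith

/-- Ellipticity: if `A : ℝ^{2n} → ℝ^{2n}` is `C¹` with `A 0 = 0`, symmetric Jacobian,
and `F(‖z‖)·‖ξ‖² ≤ ⟪DA(z)ξ, ξ⟫` where `F t = g t / t` with `g` satisfying the
Lieberman condition, then there is `c > 0` (depending only on `g₀`) with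
`⟪A z, z⟫ ≥ c·‖z‖²·F(‖z‖) ≥ c·G(‖z‖)` for all `z ≠ 0`, where `G t = ∫₀ᵗ g`. -/
theorem stmt14 (n : ℕ) (hn : 1 ≤ n)
    (g g' F G : ℝ → ℝ) (δ g₀ : ℝ) (hδ : 0 < δ) (hδg₀ : δ ≤ g₀)
    (hcont : ContinuousOn g (Ici 0))
    (hderiv : ∀ t > (0:ℝ), HasDerivAt g (g' t) t)
    (hpos : ∀ t > (0:ℝ), 0 < g t) (h0 : g 0 = 0)
    (hlieb₁ : ∀ t > (0:ℝ), δ * g t ≤ t * g' t)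
    (hlieb₂ : ∀ t > (0:ℝ), t * g' t ≤ g₀ * g t)
    (hF : ∀ t, F t = g t / t)
    (hG : ∀ t, G t = ∫ s in (0:ℝ)..t, g s)
    (A : EuclideanSpace ℝ (Fin (2 * n)) → EuclideanSpace ℝ (Fin (2 * n)))
    (DA : EuclideanSpace ℝ (Fin (2 * n)) →
      EuclideanSpace ℝ (Fin (2 * n)) →L[ℝ] EuclideanSpace ℝ (Fin (2 * n)))
    (hA0 : A 0 = 0)
    (hAderiv : ∀ z, HasFDerivAt A (DA z) z)
    (hsymm : ∀ z ξ η, ⟪DA z ξ, η⟫ = ⟪DA z η, ξ⟫)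
    (hlower : ∀ z ξ, F ‖z‖ * ‖ξ‖ ^ 2 ≤ ⟪DA z ξ, ξ⟫) :
    ∃ c > (0:ℝ), ∀ z : EuclideanSpace ℝ (Fin (2 * n)), z ≠ 0 →
      c * (‖z‖ ^ 2 * F ‖z‖) ≤ ⟪A z, z⟫ ∧
      c * G ‖z‖ ≤ c * (‖z‖ ^ 2 * F ‖z‖) :=
  stmt14_general n g g' F G δ g₀ hδ hδg₀ hcont hderiv hpos hlieb₁ hlieb₂ hF hG A DA hA0 hAderiv
    hlower
end

section
/- Let A : ℝ^{2n} → ℝ^{2n} be C¹ with A(0)=0 and symmetric Jacobian satisfying F(|z|)·|ξ|² ≤ ⟨DA(z)ξ, ξ⟩ ≤ L·F(|z|)·|ξ|² for all z, ξ, where F(t) = g(t)/t and g is C¹, g(0)=0, with δ ≤ t g'(t)/g(t) ≤ g₀ (0 < δ ≤ g₀). Then there is c = c(g₀, L) > 0 such that for all z, w ∈ ℝ^{2n}: if |z−w| ≤ 2|z| then ⟨A(z)−A(w), z−w⟩ ≥ c·|z−w|²·F(|z|), and if |z−w| > 2|z| then ⟨A(z)−A(w), z−w⟩ ≥ c·|z−w|²·F(|z−w|).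 -/
/-!
The inner product `⟪A z - A w, z - w⟫` is the increment of `s ↦ ⟪A (w + s • (z - w)), z - w⟫`
on `[0, 1]`, whose derivative `⟪DA (w + s • (z - w)) (z - w), z - w⟫` is nonnegative and at
least `F ‖w + s • (z - w)‖ ‖z - w‖²`.
On a quarter of the segment (next to `z` if `‖z - w‖ ≤ 2‖z‖`, next to `w` otherwise) the point
`w + s • (z - w)` has norm between `r / 4` and `4r`, where `r = ‖z‖`, resp. `r = ‖z - w‖`. There
`F` is at least `4^(-g₀) / 4 · F r`, because `g` is nondecreasing and `g r ≤ 4^g₀ g (r / 4)`.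
-/

open Set
open scoped RealInnerProductSpace

theorem mul_sub_le_sub_of_hasDerivAt {f f' : ℝ → ℝ} {x a b y m : ℝ}
    (hf : ∀ s, HasDerivAt f (f' s) s) (hnn : ∀ s, 0 ≤ f' s) (hm : ∀ s ∈ Ioo a b, m ≤ f' s)
    (hxa : x ≤ a) (hab : a ≤ b) (hby : b ≤ y) : m * (b - a) ≤ f y - f x := by
  have hmono := monotone_of_hasDerivAt_nonneg hf hnn
  have hslope : MonotoneOn (fun s => f s - m * s) (Icc a b) := by
    refine monotoneOn_of_hasDerivWithinAt_nonneg (convex_Icc a b)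
      (fun s _ => ((hf s).sub ((hasDerivAt_id s).const_mul m)).continuousAt.continuousWithinAt)
      (fun s _ => ((hf s).sub ((hasDerivAt_id s).const_mul m)).hasDerivWithinAt) ?_
    intro s hs
    rw [interior_Icc] at hs
    simpa using hm s hs
  have hab' := hslope (left_mem_Icc.2 hab) (right_mem_Icc.2 hab) hab
  linarith [hmono hxa, hmono hby]

section Segment

variable {E : Type*} [NormedAddCommGroup E] [InnerProductSpace ℝ E]

theorem hasDerivAt_inner_comp_lineMap {A : E → E} {DA : E → E →L[ℝ] E}
    (hA : ∀ z, HasFDerivAt A (DA z) z) (w v : E) (s : ℝ) :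
    HasDerivAt (fun s : ℝ => ⟪A (w + s • v), v⟫) ⟪DA (w + s • v) v, v⟫ s := by
  have hline : HasDerivAt (fun s : ℝ => w + s • v) v s := by
    simpa using ((hasDerivAt_id s).smul_const v).const_add w
  simpa using ((hA _).comp_hasDerivAt s hline).inner ℝ (hasDerivAt_const s v)

theorem mul_sub_le_inner_sub {A : E → E} {DA : E → E →L[ℝ] E}
    (hA : ∀ z, HasFDerivAt A (DA z) z) (hDA : ∀ z ξ, 0 ≤ ⟪DA z ξ, ξ⟫) {z w : E} {a b m : ℝ}
    (ha : 0 ≤ a) (hab : a ≤ b) (hb : b ≤ 1)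
    (hm : ∀ s ∈ Ioo a b, m ≤ ⟪DA (w + s • (z - w)) (z - w), z - w⟫) :
    m * (b - a) ≤ ⟪A z - A w, z - w⟫ := by
  have key := mul_sub_le_sub_of_hasDerivAt (hasDerivAt_inner_comp_lineMap hA w (z - w))
    (fun s => hDA _ _) hm ha hab hb
  simpa [inner_sub_left] using key

theorem norm_lineMap_mem_Icc_of_norm_sub_le {z w : E} {s : ℝ} (hzw : ‖z - w‖ ≤ 2 * ‖z‖)
    (hs : 3 / 4 ≤ s) (hs1 : s ≤ 1) : ‖w + s • (z - w)‖ ∈ Icc (‖z‖ / 4) (4 * ‖z‖) := by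
  have hpt : w + s • (z - w) = z - (1 - s) • (z - w) := by module
  have hsmall : ‖(1 - s) • (z - w)‖ ≤ ‖z‖ / 2 := by
    rw [norm_smul, Real.norm_of_nonneg (by linarith)]
    nlinarith [norm_nonneg (z - w)]
  rw [hpt]
  constructor <;> linarith [norm_sub_norm_le z ((1 - s) • (z - w)),
    norm_sub_le z ((1 - s) • (z - w))]

theorem norm_lineMap_mem_Icc_of_lt_norm_sub {z w : E} {s : ℝ} (hzw : 2 * ‖z‖ < ‖z - w‖)
    (hs : 0 ≤ s) (hs1 : s ≤ 1 / 4) :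
    ‖w + s • (z - w)‖ ∈ Icc (‖z - w‖ / 4) (4 * ‖z - w‖) := by
  have hpt : w + s • (z - w) = z - (1 - s) • (z - w) := by module
  have hnorm : ‖(1 - s) • (z - w)‖ = (1 - s) * ‖z - w‖ := by
    rw [norm_smul, Real.norm_of_nonneg (by linarith)]
  rw [hpt, norm_sub_rev z ((1 - s) • (z - w))]
  constructor <;> nlinarith [norm_sub_norm_le ((1 - s) • (z - w)) z,
    norm_sub_le ((1 - s) • (z - w)) z, norm_nonneg (z - w)]

end Segment

section Growth

variable {g g' : ℝ → ℝ}

theorem monotoneOn_Ioi_of_lower_growth {δ : ℝ} (hδ : 0 < δ)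
    (hderiv : ∀ t > 0, HasDerivAt g (g' t) t) (hpos : ∀ t > 0, 0 < g t)
    (hgrowth : ∀ t > 0, δ * g t ≤ t * g' t) : MonotoneOn g (Ioi 0) := by
  refine monotoneOn_of_hasDerivWithinAt_nonneg (convex_Ioi 0)
    (fun t ht => (hderiv t ht).continuousAt.continuousWithinAt)
    (fun t ht => (hderiv t (by simpa using ht)).hasDerivWithinAt) ?_
  intro t ht
  rw [interior_Ioi] at ht
  exact nonneg_of_mul_nonneg_right ((mul_pos hδ (hpos t ht)).le.trans (hgrowth t ht)) ht

theorem le_div_rpow_mul_of_upper_growth {p a b : ℝ}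
    (hderiv : ∀ t > 0, HasDerivAt g (g' t) t) (hpos : ∀ t > 0, 0 < g t)
    (hgrowth : ∀ t > 0, t * g' t ≤ p * g t) (ha : 0 < a) (hab : a ≤ b) :
    g b ≤ (b / a) ^ p * g a := by
  have hb : 0 < b := ha.trans_le hab
  have hmono : MonotoneOn (fun t => p * Real.log t - Real.log (g t)) (Ioi 0) := by
    have hψ : ∀ t > (0 : ℝ), HasDerivAt (fun t => p * Real.log t - Real.log (g t))
        (p * t⁻¹ - g' t / g t) t := fun t ht =>
      ((Real.hasDerivAt_log ht.ne').const_mul p).sub ((hderiv t ht).log (hpos t ht).ne')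
    refine monotoneOn_of_hasDerivWithinAt_nonneg (convex_Ioi 0)
      (fun t ht => (hψ t ht).continuousAt.continuousWithinAt)
      (fun t ht => (hψ t (by simpa using ht)).hasDerivWithinAt) ?_
    intro t ht
    rw [interior_Ioi] at ht
    have hgt := hpos t ht
    rw [sub_nonneg, div_le_iff₀ hgt, ← div_eq_mul_inv, div_mul_eq_mul_div, le_div_iff₀ ht]
    linarith [hgrowth t ht]
  have hlog : Real.log (g b) ≤ Real.log (g a) + p * Real.log (b / a) := by
    have := hmono ha hb hab
    rw [Real.log_div hb.ne' ha.ne']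
    simp only at this
    linarith
  calc g b = Real.exp (Real.log (g b)) := (Real.exp_log (hpos b hb)).symm
    _ ≤ Real.exp (Real.log (g a) + p * Real.log (b / a)) := Real.exp_le_exp.mpr hlog
    _ = (b / a) ^ p * g a := by
      rw [Real.exp_add, Real.exp_log (hpos a ha), Real.rpow_def_of_pos (div_pos hb ha),
        mul_comm (Real.log _) p, mul_comm]

theorem rpow_neg_div_mul_div_le_div {p k r t : ℝ} (hmono : MonotoneOn g (Ioi 0))
    (hpos : ∀ t > 0, 0 < g t) (hdoubling : ∀ a b, 0 < a → a ≤ b → g b ≤ (b / a) ^ p * g a)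
    (hk : 1 ≤ k) (hr : 0 ≤ r) (ht : t ∈ Icc (r / k) (k * r)) :
    k ^ (-p) / k * (g r / r) ≤ g t / t := by
  rcases hr.eq_or_lt with rfl | hr
  · obtain rfl : t = 0 := le_antisymm (by simpa using ht.2) (by simpa using ht.1)
    simp
  have hk0 : 0 < k := zero_lt_one.trans_le hk
  have hrk : 0 < r / k := div_pos hr hk0
  have ht0 : 0 < t := hrk.trans_le ht.1
  have hg : g r ≤ k ^ p * g t := calc
    g r ≤ (r / (r / k)) ^ p * g (r / k) := hdoubling _ _ hrk (div_le_self hr.le hk)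
    _ = k ^ p * g (r / k) := by rw [div_div_cancel₀ hr.ne']
    _ ≤ k ^ p * g t := by gcongr; exact hmono hrk ht0 ht.1
  have hkp : 0 < k ^ p := Real.rpow_pos_of_pos hk0 p
  calc k ^ (-p) / k * (g r / r) = k ^ (-p) * g r / (k * r) := by ring
    _ ≤ g t / (k * r) := by
      gcongr
      rw [Real.rpow_neg hk0.le, inv_mul_le_iff₀ hkp]
      exact hg
    _ ≤ g t / t := div_le_div_of_nonneg_left (hpos t ht0).le ht0 ht.2

end Growth

theorem stmt15_general (n : ℕ) (L : ℝ)
    (g g' F : ℝ → ℝ) (δ g₀ : ℝ) (hδ : 0 < δ)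
    (hderiv : ∀ t > (0:ℝ), HasDerivAt g (g' t) t)
    (hpos : ∀ t > (0:ℝ), 0 < g t)
    (hlieb₁ : ∀ t > (0:ℝ), δ * g t ≤ t * g' t)
    (hlieb₂ : ∀ t > (0:ℝ), t * g' t ≤ g₀ * g t)
    (hF : ∀ t, F t = g t / t)
    (A : EuclideanSpace ℝ (Fin (2 * n)) → EuclideanSpace ℝ (Fin (2 * n)))
    (DA : EuclideanSpace ℝ (Fin (2 * n)) →
      EuclideanSpace ℝ (Fin (2 * n)) →L[ℝ] EuclideanSpace ℝ (Fin (2 * n)))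
    (hAderiv : ∀ z, HasFDerivAt A (DA z) z)
    (hlower : ∀ z ξ, F ‖z‖ * ‖ξ‖ ^ 2 ≤ ⟪DA z ξ, ξ⟫) :
    ∃ c > (0:ℝ), ∀ z w : EuclideanSpace ℝ (Fin (2 * n)),
      (‖z - w‖ ≤ 2 * ‖z‖ →
        c * (‖z - w‖ ^ 2 * F ‖z‖) ≤ ⟪A z - A w, z - w⟫) ∧
      (2 * ‖z‖ < ‖z - w‖ →
        c * (‖z - w‖ ^ 2 * F ‖z - w‖) ≤ ⟪A z - A w, z - w⟫) := by
  have hmono := monotoneOn_Ioi_of_lower_growth hδ hderiv hpos hlieb₁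
  have hcomparable : ∀ r t, 0 ≤ r → t ∈ Icc (r / 4) (4 * r) → 4 ^ (-g₀) / 4 * F r ≤ F t :=
    fun r t hr ht => by
      simpa only [hF] using rpow_neg_div_mul_div_le_div hmono hpos
        (fun _ _ => le_div_rpow_mul_of_upper_growth hderiv hpos hlieb₂) (by norm_num) hr ht
  have hF_nonneg : ∀ t ≥ 0, 0 ≤ F t := fun t ht => by
    rw [hF]
    rcases ht.eq_or_lt with rfl | ht
    · simp
    · exact div_nonneg (hpos t ht).le ht.le
  have hDA_nonneg : ∀ z ξ, 0 ≤ ⟪DA z ξ, ξ⟫ := fun z ξ =>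
    (mul_nonneg (hF_nonneg _ (norm_nonneg z)) (sq_nonneg _)).trans (hlower z ξ)
  have hquarter : ∀ {z w : EuclideanSpace ℝ (Fin (2 * n))} {a r : ℝ}, 0 ≤ a → a + 1 / 4 ≤ 1 →
      0 ≤ r → (∀ s ∈ Ioo a (a + 1 / 4), ‖w + s • (z - w)‖ ∈ Icc (r / 4) (4 * r)) →
      4 ^ (-g₀) / 16 * (‖z - w‖ ^ 2 * F r) ≤ ⟪A z - A w, z - w⟫ := by
    intro z w a r ha ha1 hr hscale
    have := mul_sub_le_inner_sub hAderiv hDA_nonneg ha (by linarith) ha1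
      (m := 4 ^ (-g₀) / 4 * F r * ‖z - w‖ ^ 2) fun s hs =>
        (mul_le_mul_of_nonneg_right (hcomparable r _ hr (hscale s hs)) (sq_nonneg _)).trans
          (hlower _ _)
    linarith
  refine ⟨4 ^ (-g₀) / 16, by positivity, fun z w => ⟨fun hle => ?_, fun hlt => ?_⟩⟩
  · exact hquarter (a := 3 / 4) (by norm_num) (by norm_num) (norm_nonneg z) fun s hs =>
      norm_lineMap_mem_Icc_of_norm_sub_le hle hs.1.le (by linarith [hs.2])
  · exact hquarter (a := 0) le_rfl (by norm_num) (norm_nonneg _) fun s hs =>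
      norm_lineMap_mem_Icc_of_lt_norm_sub hlt hs.1.le (by linarith [hs.2])

/-- Monotonicity inequality: if `A : ℝ^{2n} → ℝ^{2n}` is `C¹` with `A 0 = 0`, symmetric
Jacobian satisfying `F(‖z‖)·‖ξ‖² ≤ ⟪DA(z)ξ, ξ⟫ ≤ L·F(‖z‖)·‖ξ‖²` with `F t = g t / t`
and `g` in the Lieberman class, then there is `c = c(g₀, L) > 0` such that for all
`z, w`: if `‖z−w‖ ≤ 2‖z‖` then `⟪A z − A w, z − w⟫ ≥ c·‖z−w‖²·F(‖z‖)`, and if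
`‖z−w‖ > 2‖z‖` then `⟪A z − A w, z − w⟫ ≥ c·‖z−w‖²·F(‖z−w‖)`. -/
theorem stmt15 (n : ℕ) (hn : 1 ≤ n) (L : ℝ) (hL : 1 ≤ L)
    (g g' F : ℝ → ℝ) (δ g₀ : ℝ) (hδ : 0 < δ) (hδg₀ : δ ≤ g₀)
    (hcont : ContinuousOn g (Ici 0))
    (hderiv : ∀ t > (0:ℝ), HasDerivAt g (g' t) t)
    (hpos : ∀ t > (0:ℝ), 0 < g t) (h0 : g 0 = 0)
    (hlieb₁ : ∀ t > (0:ℝ), δ * g t ≤ t * g' t)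
    (hlieb₂ : ∀ t > (0:ℝ), t * g' t ≤ g₀ * g t)
    (hF : ∀ t, F t = g t / t)
    (A : EuclideanSpace ℝ (Fin (2 * n)) → EuclideanSpace ℝ (Fin (2 * n)))
    (DA : EuclideanSpace ℝ (Fin (2 * n)) →
      EuclideanSpace ℝ (Fin (2 * n)) →L[ℝ] EuclideanSpace ℝ (Fin (2 * n)))
    (hA0 : A 0 = 0)
    (hAderiv : ∀ z, HasFDerivAt A (DA z) z)
    (hsymm : ∀ z ξ η, ⟪DA z ξ, η⟫ = ⟪DA z η, ξ⟫)
    (hlower : ∀ z ξ, F ‖z‖ * ‖ξ‖ ^ 2 ≤ ⟪DA z ξ, ξ⟫)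
    (hupper : ∀ z ξ, ⟪DA z ξ, ξ⟫ ≤ L * (F ‖z‖ * ‖ξ‖ ^ 2)) :
    ∃ c > (0:ℝ), ∀ z w : EuclideanSpace ℝ (Fin (2 * n)),
      (‖z - w‖ ≤ 2 * ‖z‖ →
        c * (‖z - w‖ ^ 2 * F ‖z‖) ≤ ⟪A z - A w, z - w⟫) ∧
      (2 * ‖z‖ < ‖z - w‖ →
        c * (‖z - w‖ ^ 2 * F ‖z - w‖) ≤ ⟪A z - A w, z - w⟫) :=
  stmt15_general n L g g' F δ g₀ hδ hderiv hpos hlieb₁ hlieb₂ hF A DA hAderiv hlower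
end
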